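/- Let b>0, M≥1 be an integer, N=2M, λ=2b/N, x_j=-b+jλ for 0≤j<N, let f:ℝ→ℝ be an odd 2b-periodic function and y_j=f(x_j). Define a_j=(2/N)·∑_{k=0}^{N-1}(-1)^j y_k sin(2πjk/N) for 0≤j<M and f_M(x)=∑_{j=0}^{M-1} a_j sin(jπx/b). Then f_M fits all grid nodes: f_M(x_k)=y_k for every 0≤k<N. -/

import Mathlib

open Real Finset

lemma sum_cos_eq' (M : ℕ) (hM : 0 < M) (p : ℤ) :
    ∑ j ∈ Finset.range M, Real.cos (Real.pi * (p : ℝ) * (j : ℝ) / (M : ℝ)) =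
      if (2 * (M : ℤ)) ∣ p then (M : ℝ) else if 2 ∣ p then 0 else 1 := by
  have hM0 : (M : ℝ) ≠ 0 := Nat.cast_ne_zero.2 hM.ne'
  set θ : ℝ := Real.pi * (p : ℝ) / (M : ℝ) with hθ
  set z : ℂ := Complex.exp (θ * Complex.I) with hz
  have hterm : ∀ j : ℕ, Real.cos (Real.pi * (p : ℝ) * (j : ℝ) / (M : ℝ)) = (z ^ j).re := by
    intro j
    rw [hz, ← Complex.exp_nat_mul,
      show ((j : ℂ) * ((θ : ℂ) * Complex.I)) = (((j : ℝ) * θ : ℝ) : ℂ) * Complex.I by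
        push_cast; ring,
      Complex.exp_ofReal_mul_I_re]
    congr 1
    rw [hθ]; ring
  have hsum : ∑ j ∈ Finset.range M, Real.cos (Real.pi * (p : ℝ) * (j : ℝ) / (M : ℝ))
      = (∑ j ∈ Finset.range M, z ^ j).re := by
    rw [Complex.re_sum]
    exact Finset.sum_congr rfl fun j _ => hterm j
  have hzM : z ^ M = Complex.exp ((p : ℂ) * (Real.pi * Complex.I)) := by
    rw [hz, ← Complex.exp_nat_mul]
    congr 1
    have hMc : (M : ℂ) ≠ 0 := Nat.cast_ne_zero.2 hM.ne'
    push_cast [hθ]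
    field_simp
  by_cases hdvd : (2 * (M : ℤ)) ∣ p
  · obtain ⟨q, hq⟩ := hdvd
    have hz1 : z = 1 := by
      rw [hz]
      have h1 : ((θ : ℂ) * Complex.I) = (q : ℤ) * (2 * Real.pi * Complex.I) := by
        have hp : (p : ℝ) = 2 * M * q := by exact_mod_cast congrArg (Int.cast : ℤ → ℝ) hq
        have : θ = (q : ℝ) * (2 * Real.pi) := by rw [hθ, hp]; field_simp
        rw [this]; push_cast; ring
      rw [h1, Complex.exp_int_mul_two_pi_mul_I]
    rw [hsum, hz1]
    simp only [one_pow, Finset.sum_const, Finset.card_range, nsmul_eq_mul, mul_one, Complex.natCast_re]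
    rw [if_pos ⟨q, hq⟩]
  · have hz1 : z ≠ 1 := by
      rw [hz]
      intro h1
      rw [Complex.exp_eq_one_iff] at h1
      obtain ⟨n, hn⟩ := h1
      apply hdvd
      have him := congrArg Complex.im hn
      simp [Complex.mul_im, Complex.ofReal_re, Complex.ofReal_im] at him
      -- him : θ = n * (2 * π)  (up to arrangement)
      have hpM : (p : ℝ) = 2 * M * n := by
        have hπ : Real.pi ≠ 0 := Real.pi_ne_zero
        rw [hθ] at him
        field_simp at him
        nlinarith [him, Real.pi_pos]
      exact ⟨n, by exact_mod_cast hpM⟩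
    rw [hsum, geom_sum_eq hz1, hzM, Complex.exp_int_mul, Complex.exp_pi_mul_I]
    rw [if_neg hdvd]
    by_cases hpar : (2 : ℤ) ∣ p
    · have : ((-1 : ℂ)) ^ p = 1 := by
        obtain ⟨q, hq⟩ := hpar
        rw [hq]
        rw [zpow_mul]
        norm_num
      rw [this]
      simp [hpar]
    · have hoddp : Odd p := Int.odd_iff.mpr (by omega)
      have : ((-1 : ℂ)) ^ p = -1 := Odd.neg_one_zpow hoddp
      rw [this, if_neg hpar]
      have hz0 : z ≠ 0 := Complex.exp_ne_zero _
      have hsub : z - 1 ≠ 0 := sub_ne_zero.2 hz1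
      have hinv : z⁻¹ - 1 ≠ 0 := sub_ne_zero.2 (fun h => hz1 (inv_eq_one.mp h))
      have hconj : (starRingEnd ℂ) z = z⁻¹ := by
        rw [hz, ← Complex.exp_conj, ← Complex.exp_neg]
        congr 1
        rw [map_mul, Complex.conj_ofReal, Complex.conj_I]
        ring
      have h2 : ((-1 - 1 : ℂ)/(z - 1)) + (starRingEnd ℂ) ((-1 - 1 : ℂ)/(z - 1)) = 2 := by
        rw [map_div₀, map_sub, map_sub, map_one, map_neg, map_one, hconj]
        have h1z : (1 : ℂ) - z ≠ 0 := sub_ne_zero.2 (fun h => hz1 h.symm)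
        have hzi : z⁻¹ - 1 = (1 - z) / z := by field_simp
        rw [hzi, div_div_eq_mul_div]
        field_simp
        ring
      rw [Complex.add_conj] at h2
      have h3 : 2 * ((-1 - 1 : ℂ)/(z - 1)).re = 2 := by exact_mod_cast h2
      linarith

/-- the trigonometric interpolant of an odd `2b`-periodic function
fits all `N = 2M` equispaced grid nodes. -/
theorem interpolant_odd_fits_all_nodes
    (b : ℝ) (hb : 0 < b) (M : ℕ) (hM : 1 ≤ M)
    (f : ℝ → ℝ)
    (hper : ∀ t, f (t + 2 * b) = f t)
    (hodd : ∀ t, f (-t) = -f t)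
    (x : ℕ → ℝ) (hx : ∀ j, x j = -b + (j : ℝ) * (2 * b / (2 * (M : ℝ))))
    (y : ℕ → ℝ) (hy : ∀ j, y j = f (x j))
    (a : ℕ → ℝ)
    (ha : ∀ j, j < M →
      a j = (2 / (2 * (M : ℝ))) * ∑ k ∈ Finset.range (2 * M),
        (-1 : ℝ) ^ j * y k * Real.sin (2 * Real.pi * (j : ℝ) * (k : ℝ) / (2 * (M : ℝ))))
    (fM : ℝ → ℝ)
    (hfM : ∀ t, fM t = ∑ j ∈ Finset.range M, a j * Real.sin ((j : ℝ) * Real.pi * t / b)) :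
    ∀ k, k < 2 * M → fM (x k) = y k := by
  intro k hk
  have hMpos : 0 < M := hM
  have hM0 : (M : ℝ) ≠ 0 := Nat.cast_ne_zero.2 hMpos.ne'
  have hb0 : b ≠ 0 := hb.ne'
  -- basic fact: y 0 = 0
  have hy0 : y 0 = 0 := by
    have h1 : f (-b) = f b := by
      have := hper (-b); rw [show -b + 2*b = b by ring] at this; exact this.symm
    have h2 : f (-b) = - f b := hodd b
    have : f (-b) = 0 := by linarith
    rw [hy, hx]; simpa using this
  -- the reflected node
  set t : ℕ := if k = 0 then 0 else 2 * M - k with ht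
  have htlt : t < 2 * M := by rw [ht]; split <;> omega
  have hyt : y t = - y k := by
    by_cases hk0 : k = 0
    · rw [ht, if_pos hk0, hk0, hy0]; ring
    · rw [ht, if_neg hk0]
      have hxx : x (2 * M - k) = - x k := by
        rw [hx, hx]
        have : ((2 * M - k : ℕ) : ℝ) = 2 * M - k := by
          push_cast [Nat.cast_sub hk.le]; ring
        rw [this]
        field_simp
        ring
      rw [hy, hy, hxx, hodd]
  -- product-to-sum
  have sinmul : ∀ A B : ℝ, Real.sin A * Real.sin B
      = (Real.cos (A - B) - Real.cos (A + B)) / 2 := by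
    intro A B; rw [Real.cos_sub, Real.cos_add]; ring
  -- node sine identity
  have hnode : ∀ j : ℕ, Real.sin ((j : ℝ) * Real.pi * (x k) / b)
      = (-1 : ℝ) ^ j * Real.sin (Real.pi * (j : ℝ) * (k : ℝ) / (M : ℝ)) := by
    intro j
    have harg : (j : ℝ) * Real.pi * (x k) / b
        = -(((j : ℤ) : ℝ) * Real.pi - Real.pi * (j : ℝ) * (k : ℝ) / (M : ℝ)) := by
      rw [hx]; push_cast; field_simp; ring
    rw [harg, Real.sin_neg, Real.sin_int_mul_pi_sub]
    simp
  -- kernel evaluation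
  have hK : ∀ l, l < 2 * M →
      (∑ j ∈ Finset.range M, Real.sin (Real.pi * (j : ℝ) * (l : ℝ) / (M : ℝ))
        * Real.sin (Real.pi * (j : ℝ) * (k : ℝ) / (M : ℝ)))
      = (M : ℝ) / 2 * ((if l = k then 1 else 0) - (if l = t then 1 else 0)) := by
    intro l hl
    have hstep : ∀ j : ℕ,
        Real.sin (Real.pi * (j : ℝ) * (l : ℝ) / (M : ℝ))
          * Real.sin (Real.pi * (j : ℝ) * (k : ℝ) / (M : ℝ))
        = (Real.cos (Real.pi * (((l : ℤ) - k : ℤ) : ℝ) * (j : ℝ) / (M : ℝ))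
          - Real.cos (Real.pi * (((l : ℤ) + k : ℤ) : ℝ) * (j : ℝ) / (M : ℝ))) / 2 := by
      intro j
      rw [sinmul]
      congr 2
      · push_cast; ring
      · push_cast; ring
    rw [Finset.sum_congr rfl (fun j _ => hstep j)]
    rw [← Finset.sum_div, Finset.sum_sub_distrib, sum_cos_eq' M hMpos, sum_cos_eq' M hMpos]
    -- now case analysis
    have hd1 : (2 * (M : ℤ)) ∣ ((l : ℤ) - k) ↔ l = k := by
      constructor
      · rintro ⟨c, hc⟩
        have hc0 : c = 0 := by
          rcases lt_trichotomy c 0 with h | h | h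
          · nlinarith [hc, (show (l:ℤ) - k > -(2*M) by push_cast; omega)]
          · exact h
          · nlinarith [hc, (show (l:ℤ) - k < 2*M by push_cast; omega)]
        rw [hc0, mul_zero, sub_eq_zero] at hc
        exact_mod_cast hc
      · intro h; rw [h]; simp
    have hd2 : (2 * (M : ℤ)) ∣ ((l : ℤ) + k) ↔ l = t := by
      constructor
      · rintro ⟨c, hc⟩
        have hc01 : c = 0 ∨ c = 1 := by
          rcases lt_trichotomy c 0 with h | h | h
          · exfalso; nlinarith [hc, (show (0:ℤ) ≤ (l:ℤ) + k by positivity)]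
          · left; exact h
          · right
            by_contra hne
            have : 2 ≤ c := by omega
            nlinarith [hc, (show (l:ℤ) + k < 4*M by push_cast; omega)]
        rcases hc01 with h | h
        · rw [h, mul_zero] at hc
          have hl0 : l = 0 := by omega
          have hk0 : k = 0 := by omega
          rw [ht, hl0, if_pos hk0]
        · rw [h, mul_one] at hc
          have hlk : l + k = 2 * M := by exact_mod_cast hc
          rw [ht]
          split <;> omega
      · intro h
        rw [h, ht]
        by_cases hk0 : k = 0
        · simp [hk0]
        · rw [if_neg hk0]
          have : ((2 * M - k : ℕ) : ℤ) + k = 2 * M := by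
            push_cast [Nat.cast_sub hk.le]; ring
          rw [this]
    have hpar : (2 : ℤ) ∣ ((l : ℤ) - k) ↔ (2 : ℤ) ∣ ((l : ℤ) + k) := by omega
    by_cases h1 : l = k <;> by_cases h2 : l = t
    · -- both: l = k = t
      rw [if_pos (hd1.mpr h1), if_pos (hd2.mpr h2), if_pos h1, if_pos h2]; ring
    · rw [if_pos (hd1.mpr h1), if_neg (fun h => h2 (hd2.mp h)), if_pos h1, if_neg h2]
      have : ¬ (2:ℤ) ∣ ((l:ℤ) + k) → False := by
        intro hnd
        have : (2:ℤ) ∣ ((l:ℤ) - k) := by rw [h1]; simp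
        exact hnd (hpar.mp this)
      rw [if_pos (by_contra fun hc => this hc)]
      ring
    · rw [if_neg (fun h => h1 (hd1.mp h)), if_pos (hd2.mpr h2), if_neg h1, if_pos h2]
      have h2d : (2:ℤ) ∣ ((l:ℤ) + k) := by
        obtain ⟨c, hc⟩ := hd2.mpr h2
        exact ⟨(M:ℤ) * c, by rw [hc]; ring⟩
      rw [if_pos (hpar.mpr h2d)]
      ring
    · rw [if_neg (fun h => h1 (hd1.mp h)), if_neg (fun h => h2 (hd2.mp h)),
        if_neg h1, if_neg h2]
      by_cases hp : (2:ℤ) ∣ ((l:ℤ) - k)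
      · rw [if_pos hp, if_pos (hpar.mp hp)]; ring
      · rw [if_neg hp, if_neg (fun h => hp (hpar.mpr h))]; ring
  -- main computation
  rw [hfM]
  have hterm : ∀ j ∈ Finset.range M,
      a j * Real.sin ((j : ℝ) * Real.pi * (x k) / b)
      = ∑ l ∈ Finset.range (2 * M), (1 / (M : ℝ))
          * (y l * (Real.sin (Real.pi * (j : ℝ) * (l : ℝ) / (M : ℝ))
            * Real.sin (Real.pi * (j : ℝ) * (k : ℝ) / (M : ℝ)))) := by
    intro j hj
    rw [ha j (Finset.mem_range.mp hj), hnode j, Finset.mul_sum, Finset.sum_mul]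
    refine Finset.sum_congr rfl fun l _ => ?_
    have hsinarg : Real.sin (2 * Real.pi * (j : ℝ) * (l : ℝ) / (2 * (M : ℝ)))
        = Real.sin (Real.pi * (j : ℝ) * (l : ℝ) / (M : ℝ)) := by
      congr 1; field_simp
    rw [hsinarg]
    have hsq : ((-1 : ℝ)) ^ j * ((-1 : ℝ)) ^ j = 1 := by
      rw [← pow_add]; exact Even.neg_one_pow ⟨j, rfl⟩
    linear_combination (2 / (2 * (M:ℝ))) * y l
      * Real.sin (Real.pi * (j : ℝ) * (l : ℝ) / (M : ℝ))
      * Real.sin (Real.pi * (j : ℝ) * (k : ℝ) / (M : ℝ)) * hsq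
  rw [Finset.sum_congr rfl hterm, Finset.sum_comm]
  have : ∀ l ∈ Finset.range (2 * M),
      (∑ j ∈ Finset.range M, (1 / (M : ℝ))
        * (y l * (Real.sin (Real.pi * (j : ℝ) * (l : ℝ) / (M : ℝ))
          * Real.sin (Real.pi * (j : ℝ) * (k : ℝ) / (M : ℝ)))))
      = (1 / (2 : ℝ)) * (y l * ((if l = k then 1 else 0) - (if l = t then 1 else 0))) := by
    intro l hl
    rw [← Finset.mul_sum, ← Finset.mul_sum, hK l (Finset.mem_range.mp hl)]
    field_simp
  rw [Finset.sum_congr rfl this, ← Finset.mul_sum]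
  have hsplit : ∑ l ∈ Finset.range (2 * M),
      y l * ((if l = k then 1 else 0) - (if l = t then 1 else 0))
      = y k - y t := by
    have h1 : ∑ l ∈ Finset.range (2 * M), (if l = k then y l else 0) = y k := by
      rw [Finset.sum_ite_eq' (Finset.range (2 * M)) k y,
        if_pos (Finset.mem_range.mpr hk)]
    have h2 : ∑ l ∈ Finset.range (2 * M), (if l = t then y l else 0) = y t := by
      rw [Finset.sum_ite_eq' (Finset.range (2 * M)) t y,
        if_pos (Finset.mem_range.mpr htlt)]
    calc ∑ l ∈ Finset.range (2 * M),
        y l * ((if l = k then (1:ℝ) else 0) - (if l = t then 1 else 0))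
        = ∑ l ∈ Finset.range (2 * M),
          ((if l = k then y l else 0) - (if l = t then y l else 0)) := by
          refine Finset.sum_congr rfl fun l _ => ?_
          split_ifs <;> ring
      _ = y k - y t := by rw [Finset.sum_sub_distrib, h1, h2]
  rw [hsplit, hyt]
  ring
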